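/- arXiv:1108.5364 — 2 statements merged into one kernel-verified Lean document; each statement's English description precedes it below -/
import Mathlib

section
/- Let α > 0, σ_θ, θ₀, and y₀ be real numbers, and let f(t) = (σ_θ²/(2α))·(1 - exp(-2α t)) + θ₀²·exp(-2α t). If g : ℝ → ℝ is differentiable with g'(t) = -2α·g(t) + α·f(t) for all t ≥ 0 and g(0) = y₀·θ₀, then g(t) = σ_θ²/(4α) + (y₀θ₀ - σ_θ²/(4α))·exp(-2α t) + (θ₀²·α - σ_θ²/2)·t·exp(-2α t) for all t ≥ 0. (This is the cross-moment formula E[y_t θ_t], Lemma 2.4.) -/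
/-!
Both `g` and the closed form solve the linear equation `y' = -2α y + α f` on `[0, ∞)` with the
same initial value `y₀ θ₀`. Their difference `u` then satisfies `|u'| ≤ 2α |u|` and `u 0 = 0`, so it
vanishes on `[0, ∞)` by Gronwall's inequality.
-/

open Real

section LinearODE

variable {E : Type*} [NormedAddCommGroup E] [NormedSpace ℝ E]

theorem eq_zero_of_hasDerivAt_smul_self {u : ℝ → E} {c a : ℝ}
    (hu : ∀ t, a ≤ t → HasDerivAt u (c • u t) t) (ha : u a = 0) :
    ∀ t, a ≤ t → u t = 0 := fun t ht =>
  eq_zero_of_abs_deriv_le_mul_abs_self_of_eq_zero_right (K := ‖c‖)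
    (fun s hs => (hu s hs.1).continuousAt.continuousWithinAt)
    (fun s hs => (hu s hs.1).hasDerivWithinAt) ha (fun s _ => (norm_smul c (u s)).le)
    t ⟨ht, le_rfl⟩

theorem eq_of_hasDerivAt_smul_add {y z h : ℝ → E} {c a : ℝ}
    (hy : ∀ t, a ≤ t → HasDerivAt y (c • y t + h t) t)
    (hz : ∀ t, a ≤ t → HasDerivAt z (c • z t + h t) t) (ha : y a = z a) :
    ∀ t, a ≤ t → y t = z t := by
  have hdiff : ∀ t, a ≤ t → HasDerivAt (y - z) (c • (y - z) t) t := fun t ht => by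
    simpa only [Pi.sub_apply, smul_sub, add_sub_add_right_eq_sub] using (hy t ht).sub (hz t ht)
  intro t ht
  exact sub_eq_zero.mp (eq_zero_of_hasDerivAt_smul_self hdiff (sub_eq_zero.mpr ha) t ht)

end LinearODE

noncomputable def ouCrossMoment (α σθ θ₀ y₀ t : ℝ) : ℝ :=
  σθ ^ 2 / (4 * α) + (y₀ * θ₀ - σθ ^ 2 / (4 * α)) * exp (-2 * α * t)
    + (θ₀ ^ 2 * α - σθ ^ 2 / 2) * t * exp (-2 * α * t)

theorem ouCrossMoment_zero (α σθ θ₀ y₀ : ℝ) : ouCrossMoment α σθ θ₀ y₀ 0 = y₀ * θ₀ := by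
  simp [ouCrossMoment]

theorem hasDerivAt_ouCrossMoment {α : ℝ} (hα : α ≠ 0) (σθ θ₀ y₀ t : ℝ) :
    HasDerivAt (ouCrossMoment α σθ θ₀ y₀)
      (-2 * α * ouCrossMoment α σθ θ₀ y₀ t
        + α * ((σθ ^ 2 / (2 * α)) * (1 - exp (-2 * α * t)) + θ₀ ^ 2 * exp (-2 * α * t))) t := by
  have hexp : HasDerivAt (fun s => exp (-2 * α * s)) (exp (-2 * α * t) * (-2 * α)) t := by
    simpa using ((hasDerivAt_id t).const_mul (-2 * α)).exp
  have hsum := ((hexp.const_mul (y₀ * θ₀ - σθ ^ 2 / (4 * α))).const_add (σθ ^ 2 / (4 * α))).add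
    (((hasDerivAt_id t).const_mul (θ₀ ^ 2 * α - σθ ^ 2 / 2)).mul hexp)
  refine HasDerivAt.congr_deriv (f := ouCrossMoment α σθ θ₀ y₀) hsum ?_
  simp only [ouCrossMoment, id_eq]
  field_simp
  ring

/-- Cross-moment formula `E[y_t θ_t]` (Lemma 2.4): if `g` is differentiable with
`g' t = -2α g t + α f t` for `t ≥ 0`, where
`f t = (σθ^2/(2α))(1 - exp(-2αt)) + θ₀^2 exp(-2αt)`, and `g 0 = y₀ θ₀`, then
`g t = σθ^2/(4α) + (y₀θ₀ - σθ^2/(4α)) exp(-2αt) + (θ₀^2 α - σθ^2/2) t exp(-2αt)`. -/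
theorem ou_cross_moment (α σθ θ₀ y₀ : ℝ) (hα : 0 < α)
    (f : ℝ → ℝ)
    (hfdef : ∀ t, f t = (σθ ^ 2 / (2 * α)) * (1 - Real.exp (-2 * α * t))
        + θ₀ ^ 2 * Real.exp (-2 * α * t))
    (g : ℝ → ℝ) (hg : Differentiable ℝ g)
    (hode : ∀ t, 0 ≤ t → deriv g t = -2 * α * g t + α * f t)
    (h0 : g 0 = y₀ * θ₀) :
    ∀ t, 0 ≤ t →
      g t = σθ ^ 2 / (4 * α)
        + (y₀ * θ₀ - σθ ^ 2 / (4 * α)) * Real.exp (-2 * α * t)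
        + (θ₀ ^ 2 * α - σθ ^ 2 / 2) * t * Real.exp (-2 * α * t) := by
  have hg' : ∀ t, 0 ≤ t → HasDerivAt g ((-2 * α) • g t + α * f t) t := fun t ht => by
    rw [smul_eq_mul, ← hode t ht]
    exact (hg t).hasDerivAt
  have hφ : ∀ t, 0 ≤ t → HasDerivAt (ouCrossMoment α σθ θ₀ y₀)
      ((-2 * α) • ouCrossMoment α σθ θ₀ y₀ t + α * f t) t := fun t _ => by
    rw [smul_eq_mul, hfdef]
    exact hasDerivAt_ouCrossMoment hα.ne' σθ θ₀ y₀ t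
  exact eq_of_hasDerivAt_smul_add hg' hφ (h0.trans (ouCrossMoment_zero α σθ θ₀ y₀).symm)
end

section
/- Let α > 0, σ_θ, σ_y, θ₀, and y₀ be real numbers, and let g(t) = σ_θ²/(4α) + (y₀θ₀ - σ_θ²/(4α))·exp(-2α t) + (θ₀²·α - σ_θ²/2)·t·exp(-2α t). If h : ℝ → ℝ is differentiable with h'(t) = σ_y² - 2α·h(t) + 2α·g(t) for all t ≥ 0 and h(0) = y₀², then for all t ≥ 0: h(t) = (σ_y²/(2α) + σ_θ²/(4α)) + (α²θ₀² - ασ_θ²/2)·t²·exp(-2α t) + (2α y₀θ₀ - σ_θ²/2)·t·exp(-2α t) + (y₀² - σ_y²/(2α) - σ_θ²/(4α))·exp(-2α t). (This is the second-moment formula E[y_t²] for the trait process, Lemma 2.5, eq. (y2).) -/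
/-! Both `h` and the closed form solve the linear equation `u' = σy² + 2α g - 2α u` with
`u 0 = y₀²`. Its right-hand side is Lipschitz in `u`, so by Grönwall uniqueness the two
functions agree for `t ≥ 0`; checking that the closed form is a solution is a derivative
computation. -/

open Set Real

noncomputable section

theorem linearODE_solution_unique_Ici {a k : ℝ} {f u w : ℝ → ℝ}
    (hu : ∀ t ∈ Ici a, HasDerivAt u (f t - k * u t) t)
    (hw : ∀ t ∈ Ici a, HasDerivAt w (f t - k * w t) t) (ha : u a = w a) :
    EqOn u w (Ici a) := by
  intro t ht
  have hlip : ∀ s, LipschitzWith ‖k‖₊ (fun x => f s - k * x) := fun s => by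
    simpa using (LipschitzWith.const (f s)).sub (lipschitzWith_smul k)
  have hIcc : Icc a t ⊆ Ici a := Icc_subset_Ici_self
  exact ODE_solution_unique (v := fun s x => f s - k * x) hlip
    (fun s hs => (hu s (hIcc hs)).continuousAt.continuousWithinAt)
    (fun s hs => (hu s (hIcc (Ico_subset_Icc_self hs))).hasDerivWithinAt)
    (fun s hs => (hw s (hIcc hs)).continuousAt.continuousWithinAt)
    (fun s hs => (hw s (hIcc (Ico_subset_Icc_self hs))).hasDerivWithinAt) ha
    ⟨ht, le_rfl⟩

def traitCrossMoment (α σθ θ₀ y₀ t : ℝ) : ℝ :=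
  σθ ^ 2 / (4 * α) + (y₀ * θ₀ - σθ ^ 2 / (4 * α)) * exp (-2 * α * t)
    + (θ₀ ^ 2 * α - σθ ^ 2 / 2) * t * exp (-2 * α * t)

def traitSecondMoment (α σθ σy θ₀ y₀ t : ℝ) : ℝ :=
  (σy ^ 2 / (2 * α) + σθ ^ 2 / (4 * α))
    + (α ^ 2 * θ₀ ^ 2 - α * σθ ^ 2 / 2) * t ^ 2 * exp (-2 * α * t)
    + (2 * α * y₀ * θ₀ - σθ ^ 2 / 2) * t * exp (-2 * α * t)
    + (y₀ ^ 2 - σy ^ 2 / (2 * α) - σθ ^ 2 / (4 * α)) * exp (-2 * α * t)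

theorem traitSecondMoment_zero (α σθ σy θ₀ y₀ : ℝ) :
    traitSecondMoment α σθ σy θ₀ y₀ 0 = y₀ ^ 2 := by
  simp [traitSecondMoment]

theorem hasDerivAt_traitSecondMoment {α : ℝ} (hα : α ≠ 0) (σθ σy θ₀ y₀ t : ℝ) :
    HasDerivAt (traitSecondMoment α σθ σy θ₀ y₀)
      (σy ^ 2 + 2 * α * traitCrossMoment α σθ θ₀ y₀ t
        - 2 * α * traitSecondMoment α σθ σy θ₀ y₀ t) t := by
  have hexp : HasDerivAt (fun s => exp (-2 * α * s)) (exp (-2 * α * t) * (-2 * α)) t := by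
    simpa using ((hasDerivAt_id t).const_mul (-2 * α)).exp
  have hsq : HasDerivAt (fun s : ℝ => s ^ 2) (2 * t) t := by simpa using hasDerivAt_pow 2 t
  have hsum := ((((hsq.fun_mul hexp).const_mul (α ^ 2 * θ₀ ^ 2 - α * σθ ^ 2 / 2)).fun_add
    (((hasDerivAt_id' t).fun_mul hexp).const_mul (2 * α * y₀ * θ₀ - σθ ^ 2 / 2))).fun_add
    (hexp.const_mul (y₀ ^ 2 - σy ^ 2 / (2 * α) - σθ ^ 2 / (4 * α)))).const_add
    (σy ^ 2 / (2 * α) + σθ ^ 2 / (4 * α))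
  refine (hsum.congr_of_eventuallyEq (.of_forall fun s => ?_)).congr_deriv ?_
  · simp only [traitSecondMoment]
    ring
  simp only [traitSecondMoment, traitCrossMoment]
  field_simp
  ring

end

/-- Second-moment formula for the trait process (Lemma 2.5, eq. (y2)):
if `h` is differentiable with `h' t = σy^2 - 2α h t + 2α g t` for `t ≥ 0`, where
`g` is the stated cross-moment function, and `h 0 = y₀^2`, then `h` equals the
closed-form expression for `E[y_t²]`. -/
theorem trait_second_moment (α σθ σy θ₀ y₀ : ℝ) (hα : 0 < α)
    (g : ℝ → ℝ)
    (hgdef : ∀ t, g t = σθ ^ 2 / (4 * α)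
        + (y₀ * θ₀ - σθ ^ 2 / (4 * α)) * Real.exp (-2 * α * t)
        + (θ₀ ^ 2 * α - σθ ^ 2 / 2) * t * Real.exp (-2 * α * t))
    (h : ℝ → ℝ) (hh : Differentiable ℝ h)
    (hode : ∀ t, 0 ≤ t → deriv h t = σy ^ 2 - 2 * α * h t + 2 * α * g t)
    (h0 : h 0 = y₀ ^ 2) :
    ∀ t, 0 ≤ t →
      h t = (σy ^ 2 / (2 * α) + σθ ^ 2 / (4 * α))
        + (α ^ 2 * θ₀ ^ 2 - α * σθ ^ 2 / 2) * t ^ 2 * Real.exp (-2 * α * t)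
        + (2 * α * y₀ * θ₀ - σθ ^ 2 / 2) * t * Real.exp (-2 * α * t)
        + (y₀ ^ 2 - σy ^ 2 / (2 * α) - σθ ^ 2 / (4 * α)) * Real.exp (-2 * α * t) := by
  obtain rfl : g = traitCrossMoment α σθ θ₀ y₀ := funext hgdef
  have hsol : EqOn h (traitSecondMoment α σθ σy θ₀ y₀) (Ici 0) :=
    linearODE_solution_unique_Ici (k := 2 * α)
      (f := fun t => σy ^ 2 + 2 * α * traitCrossMoment α σθ θ₀ y₀ t)
      (fun t ht => (hh t).hasDerivAt.congr_deriv (by rw [hode t ht]; ring))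
      (fun t _ => hasDerivAt_traitSecondMoment hα.ne' σθ σy θ₀ y₀ t)
      (by rw [h0, traitSecondMoment_zero])
  exact fun t ht => hsol ht
end
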